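/- arXiv:2110.12806 — 2 statements merged into one kernel-verified Lean document; each statement's English description precedes it below -/
import Mathlib

section
/- Let (g_b) be a family of self-maps of a set M satisfying commutativity (g_{b₁} ∘ g_{b₂} = g_{b₂} ∘ g_{b₁}) and coherency ((g_b)^[a] = (g_{b/gcd(a,b)})^[a/gcd(a,b)] for all a ≥ 0, b ≥ 1, with in particular g_{b₁ b₂}^[b₂] = g_{b₁}). Then for all nonnegative integers a₁, a₂ and positive integers b₁, b₂: (g_{b₂})^[a₂] ∘ (g_{b₁})^[a₁] = (g_{b₁ b₂})^[a₁ b₂ + a₂ b₁]. -/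
theorem Function.iterate_iterate_comp_iterate_iterate {α : Type*} (f : α → α) (m n a b : ℕ) :
    (f^[n])^[b] ∘ (f^[m])^[a] = f^[b * n + a * m] := by
  rw [← iterate_mul, ← iterate_mul, ← iterate_add, mul_comm n, mul_comm m]

theorem iterate_comp_eq_general {M : Type*} (g : ℕ+ → M → M)
    (hcoh : ∀ b₁ b₂ : ℕ+, (g (b₁ * b₂))^[(b₂ : ℕ)] = g b₁) :
    ∀ (a₁ a₂ : ℕ) (b₁ b₂ : ℕ+),
      (g b₂)^[a₂] ∘ (g b₁)^[a₁] = (g (b₁ * b₂))^[a₂ * (b₁ : ℕ) + a₁ * (b₂ : ℕ)] := by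
  intro a₁ a₂ b₁ b₂
  have hg₁ : g b₁ = (g (b₁ * b₂))^[(b₂ : ℕ)] := (hcoh b₁ b₂).symm
  have hg₂ : g b₂ = (g (b₁ * b₂))^[(b₁ : ℕ)] := mul_comm b₁ b₂ ▸ (hcoh b₂ b₁).symm
  rw [hg₁, hg₂]
  exact Function.iterate_iterate_comp_iterate_iterate _ _ _ _ _

/-- Lemma 2.2: for a commuting, coherent family `g : ℕ+ → M → M`,
`(g b₂)^[a₂] ∘ (g b₁)^[a₁] = (g (b₁*b₂))^[a₂*b₁ + a₁*b₂]`. -/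
theorem iterate_comp_eq {M : Type*} (g : ℕ+ → M → M)
    (hcomm : ∀ b₁ b₂ : ℕ+, g b₁ ∘ g b₂ = g b₂ ∘ g b₁)
    (hcoh : ∀ b₁ b₂ : ℕ+, (g (b₁ * b₂))^[(b₂ : ℕ)] = g b₁) :
    ∀ (a₁ a₂ : ℕ) (b₁ b₂ : ℕ+),
      (g b₂)^[a₂] ∘ (g b₁)^[a₁] = (g (b₁ * b₂))^[a₂ * (b₁ : ℕ) + a₁ * (b₂ : ℕ)] :=
  iterate_comp_eq_general g hcoh
end

section
/- Let (g_b) be a family of self-maps of a set M such that g_{b₁ b₂}^[b₂] = g_{b₁} for all positive integers b₁, b₂ and g₁ = f. Define Ψ : ℚ≥0 → (M → M) on nonnegative rationals by Ψ(a/b) = (g_b)^[a] (well-defined by coherency). Then Ψ is a monoid homomorphism from (ℚ≥0, +) to (M → M, ∘): Ψ(0) = id and Ψ(q₁ + q₂) = Ψ(q₁) ∘ Ψ(q₂). -/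
lemma NNRat.exists_eq_div_common_denom (q₁ q₂ : ℚ≥0) :
    ∃ (a₁ a₂ : ℕ) (b : ℕ+), q₁ = a₁ / (b : ℕ) ∧ q₂ = a₂ / (b : ℕ) := by
  refine ⟨q₁.num * q₂.den, q₂.num * q₁.den, ⟨q₁.den * q₂.den, by positivity⟩, ?_, ?_⟩
  · rw [PNat.mk_coe, Nat.cast_mul, Nat.cast_mul,
      mul_div_mul_right _ _ (Nat.cast_ne_zero.2 q₂.den_ne_zero), NNRat.num_div_den]
  · rw [PNat.mk_coe, Nat.cast_mul, Nat.cast_mul, mul_comm (q₁.den : ℚ≥0),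
      mul_div_mul_right _ _ (Nat.cast_ne_zero.2 q₁.den_ne_zero), NNRat.num_div_den]

theorem psi_monoid_hom_general {M : Type*} (g : ℕ+ → M → M)
    (Ψ : ℚ≥0 → M → M)
    (hΨ : ∀ (a : ℕ) (b : ℕ+), Ψ ((a : ℚ≥0) / ((b : ℕ) : ℚ≥0)) = (g b)^[a]) :
    Ψ 0 = id ∧ ∀ q₁ q₂ : ℚ≥0, Ψ (q₁ + q₂) = Ψ q₁ ∘ Ψ q₂ := by
  refine ⟨by simpa using hΨ 0 1, fun q₁ q₂ => ?_⟩
  obtain ⟨a₁, a₂, b, rfl, rfl⟩ := NNRat.exists_eq_div_common_denom q₁ q₂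
  rw [← add_div, ← Nat.cast_add, hΨ, hΨ, hΨ, Function.iterate_add]

/-- If `g : ℕ+ → M → M` is a commuting, coherent family and `Ψ : ℚ≥0 → M → M` satisfies
`Ψ (a/b) = (g b)^[a]`, then `Ψ` is a monoid homomorphism from `(ℚ≥0, +)` to `(M → M, ∘)`. -/
theorem psi_monoid_hom {M : Type*} (g : ℕ+ → M → M)
    (hcomm : ∀ b₁ b₂ : ℕ+, g b₁ ∘ g b₂ = g b₂ ∘ g b₁)
    (hcoh : ∀ b₁ b₂ : ℕ+, (g (b₁ * b₂))^[(b₂ : ℕ)] = g b₁)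
    (Ψ : ℚ≥0 → M → M)
    (hΨ : ∀ (a : ℕ) (b : ℕ+), Ψ ((a : ℚ≥0) / ((b : ℕ) : ℚ≥0)) = (g b)^[a]) :
    Ψ 0 = id ∧ ∀ q₁ q₂ : ℚ≥0, Ψ (q₁ + q₂) = Ψ q₁ ∘ Ψ q₂ :=
  psi_monoid_hom_general g Ψ hΨ
end
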